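/- Let P be a normal program, V a valuation, and π ∈ S_{(P,V)} a minimally specific possibilistic model of the constraints induced by P and V such that V(l) = N(l) for every l ∈ Lit_P and N(l) ∈ {0,1} for every l ∈ Lit_P. Then M = {l ∈ Lit_P : N(l) = 1} is an answer set of the normal program P. -/
import Mathlib


open Classical

namespace PASP

/-- An interpretation assigns a truth value to each atom. -/
abbrev Interp (A : Type) := A → Bool

/-- A literal is an atom with a sign (`true` = positive, `false` = classical negation). -/
abbrev Lit (A : Type) := A × Bool

/-- A possibility distribution on interpretations. -/
abbrev PossDist (A : Type) := Interp A → ℝ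

variable {A : Type}

def litSat (ω : Interp A) (l : Lit A) : Prop := ω l.1 = l.2

def IsPossDist (π : PossDist A) : Prop := ∀ ω, 0 ≤ π ω ∧ π ω ≤ 1

noncomputable def poss (π : PossDist A) (p : Interp A → Prop) : ℝ :=
  sSup {x | ∃ ω, p ω ∧ π ω = x}

noncomputable def nec (π : PossDist A) (p : Interp A → Prop) : ℝ :=
  1 - poss π fun ω => ¬ p ω

noncomputable def necLit (π : PossDist A) (l : Lit A) : ℝ :=
  nec π fun ω => litSat ω l

def Consistent (M : Set (Lit A)) : Prop :=
  ∀ a : A, ¬ ((a, true) ∈ M ∧ (a, false) ∈ M)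

/-- A simple rule `l₀ ← l₁,…,l_m`; a head `none` stands for `⊥` (constraint rule). -/
structure SimpleRule (A : Type) where
  head : Option (Lit A)
  body : Finset (Lit A)

/-- A consistent set of literals `I` is a model of a simple rule if the head is in `I`
whenever the body is contained in `I` (for a constraint rule the body must not be
contained in `I`). -/
def ruleModel (I : Set (Lit A)) (r : SimpleRule A) : Prop :=
  (↑r.body : Set (Lit A)) ⊆ I → ∃ l, r.head = some l ∧ l ∈ I

/-- Models of a simple program: the consistent sets of literals that are models of all
rules, together with the set of all literals itself. -/
def IsModel (P : Set (SimpleRule A)) (I : Set (Lit A)) : Prop :=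
  (Consistent I ∧ ∀ r ∈ P, ruleModel I r) ∨ I = Set.univ

/-- An answer set of a simple program is a minimal model with respect to set inclusion. -/
def IsAnswerSet (P : Set (SimpleRule A)) (I : Set (Lit A)) : Prop :=
  IsModel P I ∧ ∀ J, IsModel P J → J ⊆ I → J = I

/-- Necessity of the head of a simple rule (`N(⊥) = 1 - Π(⊤)` for constraint rules). -/
noncomputable def headNec (π : PossDist A) : Option (Lit A) → ℝ
  | some l => necLit π l
  | none => nec π fun _ => False

/-- `min(N(l₁),…,N(l_m))`, where the minimum of the empty list is 1. -/
noncomputable def minBody (π : PossDist A) (B : Finset (Lit A)) : ℝ :=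
  sInf (insert 1 (necLit π '' (↑B : Set (Lit A))))

/-- The constraint `N(l₀) ≥ min(N(l₁),…,N(l_m))` imposed by a simple rule. -/
def simpleConstraint (π : PossDist A) (r : SimpleRule A) : Prop :=
  minBody π r.body ≤ headNec π r.head

/-- The possibilistic models of a simple program. -/
def possModels (P : Set (SimpleRule A)) : Set (PossDist A) :=
  {π | IsPossDist π ∧ ∀ r ∈ P, simpleConstraint π r}

/-- `π` is a minimally specific element of `S`: it belongs to `S` and no pointwise
greater element of `S` differs from it. -/
def MinSpecific (S : Set (PossDist A)) (π : PossDist A) : Prop :=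
  π ∈ S ∧ ∀ π' ∈ S, π ≤ π' → π' = π

/-- A normal rule `l₀ ← l₁,…,l_m, not l_{m+1},…, not l_n`; head `none` stands for `⊥`. -/
structure NormalRule (A : Type) where
  head : Option (Lit A)
  pos : Finset (Lit A)
  neg : Finset (Lit A)

/-- The Gelfond–Lifschitz reduct of a normal program with respect to a set of literals. -/
def reduct (P : Set (NormalRule A)) (I : Set (Lit A)) : Set (SimpleRule A) :=
  {s | ∃ r ∈ P, (∀ l ∈ r.neg, l ∉ I) ∧ s = ⟨r.head, r.pos⟩}

/-- `M` is an answer set of the normal program `P` when it is an answer set of the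
simple program `P^M`. -/
def NormalAnswerSet (P : Set (NormalRule A)) (M : Set (Lit A)) : Prop :=
  IsAnswerSet (reduct P M) M

/-- A valuation maps every literal into `[0,1]`. -/
def IsVal (V : Lit A → ℝ) : Prop := ∀ l, 0 ≤ V l ∧ V l ≤ 1

/-- `min(1 − V(l_{m+1}),…,1 − V(l_n))`, with the empty minimum equal to 1. -/
noncomputable def minNeg (V : Lit A → ℝ) (B : Finset (Lit A)) : ℝ :=
  sInf (insert 1 ((fun l => 1 - V l) '' (↑B : Set (Lit A))))

/-- The constraint `N(l₀) ≥ min(N(l₁),…,N(l_m), 1−V(l_{m+1}),…,1−V(l_n))` induced by a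
normal rule and a valuation `V`. -/
def normalConstraint (π : PossDist A) (V : Lit A → ℝ) (r : NormalRule A) : Prop :=
  min (minBody π r.pos) (minNeg V r.neg) ≤ headNec π r.head

/-- The possibility distributions satisfying all constraints induced by `P` and `V`. -/
def possModelsV (P : Set (NormalRule A)) (V : Lit A → ℝ) : Set (PossDist A) :=
  {π | IsPossDist π ∧ ∀ r ∈ P, normalConstraint π V r}

section Aux

variable {π : PossDist A}

lemma poss_nonneg (hπ : IsPossDist π) (p : Interp A → Prop) : 0 ≤ poss π p :=
  Real.sSup_nonneg (by rintro x ⟨ω, _, rfl⟩; exact (hπ ω).1)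

lemma poss_le_one (hπ : IsPossDist π) (p : Interp A → Prop) : poss π p ≤ 1 :=
  Real.sSup_le (by rintro x ⟨ω, _, rfl⟩; exact (hπ ω).2) one_pos.le

lemma le_poss (hπ : IsPossDist π) {p : Interp A → Prop} {ω : Interp A} (h : p ω) :
    π ω ≤ poss π p :=
  le_csSup ⟨1, by rintro x ⟨ω', _, rfl⟩; exact (hπ ω').2⟩ ⟨ω, h, rfl⟩

lemma poss_eq_zero_iff (hπ : IsPossDist π) (p : Interp A → Prop) :
    poss π p = 0 ↔ ∀ ω, p ω → π ω = 0 := by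
  constructor
  · intro h ω hω
    exact le_antisymm (h ▸ le_poss hπ hω) (hπ ω).1
  · intro h
    exact le_antisymm (Real.sSup_le (by rintro x ⟨ω, hw, rfl⟩; exact (h ω hw).le) le_rfl)
      (poss_nonneg hπ p)

lemma necLit_nonneg (hπ : IsPossDist π) (l : Lit A) : 0 ≤ necLit π l := by
  have := poss_le_one hπ (fun ω => ¬ litSat ω l)
  unfold necLit nec; linarith

lemma necLit_le_one (hπ : IsPossDist π) (l : Lit A) : necLit π l ≤ 1 := by
  have := poss_nonneg hπ (fun ω => ¬ litSat ω l)
  unfold necLit nec; linarith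

lemma necLit_eq_one_iff (hπ : IsPossDist π) (l : Lit A) :
    necLit π l = 1 ↔ ∀ ω, ¬ litSat ω l → π ω = 0 := by
  unfold necLit nec
  rw [sub_eq_self, poss_eq_zero_iff hπ]

lemma headNec_nonneg (hπ : IsPossDist π) (h : Option (Lit A)) : 0 ≤ headNec π h := by
  cases h with
  | none =>
    have := poss_le_one hπ (fun ω => ¬ False)
    simp only [headNec]; unfold nec; linarith
  | some l => exact necLit_nonneg hπ l

lemma minBody_bddBelow (hπ : IsPossDist π) (B : Finset (Lit A)) :
    BddBelow (insert 1 (necLit π '' (↑B : Set (Lit A))) : Set ℝ) := by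
  refine ⟨0, ?_⟩
  rintro x (rfl | ⟨l, _, rfl⟩)
  · exact one_pos.le
  · exact necLit_nonneg hπ l

lemma minBody_le_one (hπ : IsPossDist π) (B : Finset (Lit A)) : minBody π B ≤ 1 :=
  csInf_le (minBody_bddBelow hπ B) (Set.mem_insert _ _)

lemma minBody_le_of_mem (hπ : IsPossDist π) {B : Finset (Lit A)} {l : Lit A} (h : l ∈ B) :
    minBody π B ≤ necLit π l :=
  csInf_le (minBody_bddBelow hπ B) (Set.mem_insert_of_mem _ ⟨l, h, rfl⟩)

lemma minBody_eq_one {B : Finset (Lit A)} (h : ∀ l ∈ B, necLit π l = 1) :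
    minBody π B = 1 := by
  have hset : (insert 1 (necLit π '' (↑B : Set (Lit A))) : Set ℝ) = {1} := by
    apply Set.Subset.antisymm
    · rintro x (rfl | ⟨l, hl, rfl⟩)
      · rfl
      · exact h l hl
    · rintro x rfl; exact Set.mem_insert _ _
  rw [minBody, hset, csInf_singleton]

lemma minNeg_eq_one {V : Lit A → ℝ} {B : Finset (Lit A)} (h : ∀ l ∈ B, V l = 0) :
    minNeg V B = 1 := by
  have hset : (insert 1 ((fun l => 1 - V l) '' (↑B : Set (Lit A))) : Set ℝ) = {1} := by
    apply Set.Subset.antisymm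
    · rintro x (rfl | ⟨l, hl, rfl⟩)
      · rfl
      · simp [h l hl]
    · rintro x rfl; exact Set.mem_insert _ _
  rw [minNeg, hset, csInf_singleton]

lemma minNeg_le_of_mem {V : Lit A → ℝ} (hV : IsVal V) {B : Finset (Lit A)} {l : Lit A}
    (h : l ∈ B) : minNeg V B ≤ 1 - V l := by
  refine csInf_le ⟨0, ?_⟩ (Set.mem_insert_of_mem _ ⟨l, h, rfl⟩)
  rintro x (rfl | ⟨m, _, rfl⟩)
  · exact one_pos.le
  · show (0:ℝ) ≤ 1 - V m
    have := (hV m).2; linarith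

/-- The crisp possibility distribution associated to a set of literals. -/
noncomputable def piJ (J : Set (Lit A)) : PossDist A :=
  fun ω => if ∀ l ∈ J, litSat ω l then 1 else 0

lemma piJ_isPossDist (J : Set (Lit A)) : IsPossDist (piJ J) := by
  intro ω; unfold piJ; split <;> norm_num

/-- The canonical interpretation of a consistent set of literals. -/
noncomputable def omegaJ (J : Set (Lit A)) : Interp A :=
  fun a => if (a, true) ∈ J then true else false

lemma omegaJ_sat {J : Set (Lit A)} (hJ : Consistent J) {l : Lit A} (hl : l ∈ J) :
    litSat (omegaJ J) l := by
  obtain ⟨a, b⟩ := l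
  cases b with
  | true => simp only [litSat, omegaJ]; rw [if_pos hl]
  | false =>
    have : (a, true) ∉ J := fun h => hJ a ⟨h, hl⟩
    simp only [litSat, omegaJ]; rw [if_neg this]

lemma necLit_piJ {J : Set (Lit A)} (hJ : Consistent J) (l : Lit A) :
    necLit (piJ J) l = if l ∈ J then 1 else 0 := by
  split
  · next hl =>
    rw [necLit_eq_one_iff (piJ_isPossDist J)]
    intro ω hω
    exact if_neg (fun h => hω (h l hl))
  · next hl =>
    set ω₀ : Interp A := fun b => if b = l.1 then !l.2 else omegaJ J b with hω₀
    have hsat : ∀ m ∈ J, litSat ω₀ m := by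
      intro m hm
      by_cases hml : m.1 = l.1
      · have hne : m ≠ l := fun h => hl (h ▸ hm)
        have hb : m.2 ≠ l.2 := by
          intro h; exact hne (Prod.ext hml h)
        have hb' : m.2 = !l.2 := by
          cases hb2 : m.2 <;> cases hl2 : l.2 <;> simp_all
        show ω₀ m.1 = m.2
        rw [hω₀]; simp only [hml, if_pos]; exact hb'.symm
      · have := omegaJ_sat hJ hm
        show ω₀ m.1 = m.2
        rw [hω₀]; simp only []; rw [if_neg hml]; exact this
    have hviol : ¬ litSat ω₀ l := by
      show ¬ ω₀ l.1 = l.2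
      rw [hω₀]; simp
    have h1 : piJ J ω₀ = 1 := if_pos hsat
    have hposs : poss (piJ J) (fun ω => ¬ litSat ω l) = 1 := by
      refine le_antisymm (poss_le_one (piJ_isPossDist J) _) ?_
      have := le_poss (piJ_isPossDist J) (p := fun ω => ¬ litSat ω l) hviol
      rw [h1] at this; exact this
    unfold necLit nec
    rw [hposs]; ring

end Aux

/-- if `π ∈ S_(P,V)` is a minimally specific possibilistic model of the
constraints induced by the normal program `P` and the valuation `V`, with `V(l) = N(l)`
and `N(l) ∈ {0,1}` for every literal, then `M = {l : N(l) = 1}` is an answer set of `P`. -/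
theorem stmt3 {A : Type} [Fintype A] (P : Set (NormalRule A)) (V : Lit A → ℝ)
    (hV : IsVal V) (π : PossDist A)
    (hπ : MinSpecific (possModelsV P V) π)
    (hstab : ∀ l : Lit A, V l = necLit π l)
    (hcrisp : ∀ l : Lit A, necLit π l = 0 ∨ necLit π l = 1) :
    NormalAnswerSet P {l : Lit A | necLit π l = 1} := by
  obtain ⟨⟨hπd, hπc⟩, hmax⟩ := hπ
  set M : Set (Lit A) := {l : Lit A | necLit π l = 1} with hMdef
  by_cases hA : Nonempty A
  case neg =>
    have hempty : IsEmpty (Lit A) := ⟨fun l => hA ⟨l.1⟩⟩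
    constructor
    · right; ext l; exact hempty.elim l
    · intro J _ _; ext l; exact hempty.elim l
  obtain ⟨a⟩ := hA
  -- membership in M
  have hMmem : ∀ l : Lit A, l ∈ M ↔ necLit π l = 1 := fun l => Iff.rfl
  -- h1: literals in M are satisfied wherever π is positive
  have h1 : ∀ l ∈ M, ∀ ω : Interp A, π ω ≠ 0 → litSat ω l := by
    intro l hl ω hω
    by_contra hsat
    exact hω (((necLit_eq_one_iff hπd l).mp ((hMmem l).mp hl)) ω hsat)
  -- h2: π satisfies the simple constraints of the reduct
  have h2 : ∀ s ∈ reduct P M, minBody π s.body ≤ headNec π s.head := by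
    rintro s ⟨r, hrP, hrneg, rfl⟩
    have hmn : minNeg V r.neg = 1 := by
      refine minNeg_eq_one (fun l hl => ?_)
      rw [hstab l]
      rcases hcrisp l with h | h
      · exact h
      · exact absurd ((hMmem l).mpr h) (hrneg l hl)
    have := hπc r hrP
    unfold normalConstraint at this
    rwa [hmn, min_eq_left (minBody_le_one hπd _)] at this
  -- h3: the case where π is identically zero makes M inconsistent
  have hzero : (∀ ω : Interp A, π ω = 0) → ∀ l : Lit A, l ∈ M := by
    intro h l
    exact (hMmem l).mpr ((necLit_eq_one_iff hπd l).mpr (fun ω _ => h ω))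
  constructor
  · -- IsModel (reduct P M) M
    by_cases hcons : Consistent M
    · left
      refine ⟨hcons, ?_⟩
      intro s hs hbody
      have h := h2 s hs
      have hb1 : minBody π s.body = 1 :=
        minBody_eq_one (fun l hl => (hMmem l).mp (hbody hl))
      rw [hb1] at h
      cases hh : s.head with
      | none =>
        exfalso
        rw [hh] at h
        have hposs : poss π (fun ω => ¬ False) = 0 := by
          have h2 : headNec π none = 1 - poss π (fun ω => ¬ False) := rfl
          have := poss_nonneg hπd (fun ω => ¬ False)
          rw [h2] at h; linarith
        have hz : ∀ ω : Interp A, π ω = 0 :=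
          fun ω => (poss_eq_zero_iff hπd _).mp hposs ω not_false
        exact hcons a ⟨hzero hz (a, true), hzero hz (a, false)⟩
      | some l =>
        refine ⟨l, rfl, ?_⟩
        rw [hh] at h
        exact (hMmem l).mpr (le_antisymm (necLit_le_one hπd l) h)
    · right
      simp only [Consistent, not_forall, not_not] at hcons
      obtain ⟨a₀, ht, hf⟩ := hcons
      have hz : ∀ ω : Interp A, π ω = 0 := by
        intro ω
        by_contra hω
        have h1t := h1 _ ht ω hω
        have h1f := h1 _ hf ω hω
        simp only [litSat] at h1t h1f
        simp [h1t] at h1f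
      ext l
      exact ⟨fun _ => trivial, fun _ => hzero hz l⟩
  · -- minimality
    intro J hJmod hJM
    rcases hJmod with ⟨hJcons, hJrules⟩ | hJuniv
    · -- J is a consistent model of the reduct
      have hle : π ≤ piJ J := by
        intro ω
        by_cases hs : ∀ l ∈ J, litSat ω l
        · have : piJ J ω = 1 := if_pos hs
          rw [this]; exact (hπd ω).2
        · have hz : piJ J ω = 0 := if_neg hs
          push_neg at hs
          obtain ⟨l, hlJ, hlnot⟩ := hs
          have : π ω = 0 := by
            by_contra hω
            exact hlnot (h1 l (hJM hlJ) ω hω)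
          rw [hz, this]
      have hpiJS : piJ J ∈ possModelsV P V := by
        refine ⟨piJ_isPossDist J, ?_⟩
        intro r hrP
        unfold normalConstraint
        by_cases hneg : ∀ l ∈ r.neg, l ∉ M
        · have hs : (⟨r.head, r.pos⟩ : SimpleRule A) ∈ reduct P M := ⟨r, hrP, hneg, rfl⟩
          by_cases hpos : (↑r.pos : Set (Lit A)) ⊆ J
          · obtain ⟨l, hl, hlJ⟩ := hJrules _ hs hpos
            have hl' : r.head = some l := hl
            have : headNec (piJ J) r.head = 1 := by
              rw [hl']
              show necLit (piJ J) l = 1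
              rw [necLit_piJ hJcons l, if_pos hlJ]
            rw [this]
            exact le_trans (min_le_left _ _) (minBody_le_one (piJ_isPossDist J) _)
          · rw [Set.not_subset] at hpos
            obtain ⟨l, hl, hlJ⟩ := hpos
            have hnl : necLit (piJ J) l = 0 := by
              rw [necLit_piJ hJcons l, if_neg hlJ]
            have : minBody (piJ J) r.pos ≤ 0 := by
              have := minBody_le_of_mem (piJ_isPossDist J) (Finset.mem_coe.mp hl)
              rw [hnl] at this; exact this
            exact le_trans (le_trans (min_le_left _ _) this)
              (headNec_nonneg (piJ_isPossDist J) r.head)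
        · push_neg at hneg
          obtain ⟨l, hl, hlM⟩ := hneg
          have hVl : V l = 1 := by rw [hstab l]; exact (hMmem l).mp hlM
          have : minNeg V r.neg ≤ 0 := by
            have := minNeg_le_of_mem hV hl
            rw [hVl] at this; simpa using this
          exact le_trans (le_trans (min_le_right _ _) this)
            (headNec_nonneg (piJ_isPossDist J) r.head)
      have heq : piJ J = π := hmax (piJ J) hpiJS hle
      ext l
      rw [hMmem l, ← heq, necLit_piJ hJcons l]
      constructor
      · intro hlJ; rw [if_pos hlJ]
      · intro h
        by_contra hlJ
        rw [if_neg hlJ] at h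
        exact one_ne_zero h.symm
    · rw [hJuniv]
      rw [hJuniv] at hJM
      exact (Set.univ_subset_iff.mp hJM).symm

end PASP
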